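/- Let M be a 2n×2n complex Hermitian doubled-up matrix, N a 2m×2n complex doubled-up matrix, and S a 2m×2m Bogoliubov matrix. Suppose N = V·N̂·W^♭, where V (2m×2m) and W (2n×2n) are Bogoliubov matrices and N̂ is a 2m×2n doubled-up matrix. Then for every s ∈ ℂ such that s·I + i·J_{2n}M + (1/2)·N^♭N is invertible, the matrix s·I + i·J_{2n}(W†MW) + (1/2)·N̂^♭N̂ is also invertible, and [I − N·(s·I + i·J_{2n}M + (1/2)·N^♭N)^{-1}·N^♭]·S = V·[I − N̂·(s·I + i·J_{2n}(W†MW) + (1/2)·N̂^♭N̂)^{-1}·N̂^♭]·(V^♭S). -/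

import Mathlib

open Matrix

noncomputable section

/-- The Krein-space metric `J_{2k} = diag(I_k, -I_k)`. -/
def Jmat (k : ℕ) : Matrix (Fin k ⊕ Fin k) (Fin k ⊕ Fin k) ℂ :=
  Matrix.fromBlocks 1 0 0 (-1)

/-- The block-swap matrix `Σ_{2k} = [[0, I_k],[I_k, 0]]`. -/
def Sig (k : ℕ) : Matrix (Fin k ⊕ Fin k) (Fin k ⊕ Fin k) ℂ :=
  Matrix.fromBlocks 0 1 1 0

/-- A `2r × 2s` complex matrix is doubled-up if `Σ_{2r} X Σ_{2s} = X^#`. -/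
def DoubledUp {r s : ℕ} (X : Matrix (Fin r ⊕ Fin r) (Fin s ⊕ Fin s) ℂ) : Prop :=
  Sig r * X * Sig s = X.map (starRingEnd ℂ)

/-- The ♭-adjoint `X^♭ = J_{2s} X† J_{2r}` of a `2r × 2s` complex matrix. -/
def flatAdj {r s : ℕ} (X : Matrix (Fin r ⊕ Fin r) (Fin s ⊕ Fin s) ℂ) :
    Matrix (Fin s ⊕ Fin s) (Fin r ⊕ Fin r) ℂ :=
  Jmat s * Xᴴ * Jmat r

/-- A `2k × 2k` complex matrix is Bogoliubov if it is doubled-up and ♭-unitary. -/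
def Bogoliubov {k : ℕ} (R : Matrix (Fin k ⊕ Fin k) (Fin k ⊕ Fin k) ℂ) : Prop :=
  DoubledUp R ∧ R * flatAdj R = 1 ∧ flatAdj R * R = 1

/-!
A ♭-unitary `W` (i.e. `W^♭ W = 1`) is a change of coordinates for the system matrix
`A(M, N) = sI + iJM + ½N^♭N`: since `W^♭ J = J W† J`, one gets `W^♭ A(M, N) W = A(W†MW, NW)`,
and a ♭-unitary left factor `V` of the coupling cancels in `N^♭N`. Hence for `N = V N̂ W^♭` the
system matrix of `(M, N)` is conjugate to that of `(W†MW, N̂)`, and `N A⁻¹ N^♭` becomes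
`V N̂ Â⁻¹ N̂^♭ V^♭`; the `V V^♭ = 1` in front of `S` does the rest.
-/

lemma Jmat_mul_Jmat (k : ℕ) : Jmat k * Jmat k = 1 := by
  simp [Jmat, fromBlocks_multiply, ← fromBlocks_one]

lemma Jmat_conjTranspose (k : ℕ) : (Jmat k)ᴴ = Jmat k := by
  simp [Jmat, fromBlocks_conjTranspose]

lemma flatAdj_mul {r s t : ℕ} (X : Matrix (Fin r ⊕ Fin r) (Fin s ⊕ Fin s) ℂ)
    (Y : Matrix (Fin s ⊕ Fin s) (Fin t ⊕ Fin t) ℂ) :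
    flatAdj (X * Y) = flatAdj Y * flatAdj X := by
  simp only [flatAdj, conjTranspose_mul, Matrix.mul_assoc]
  rw [← Matrix.mul_assoc (Jmat s) (Jmat s), Jmat_mul_Jmat, Matrix.one_mul]

lemma flatAdj_flatAdj {r s : ℕ} (X : Matrix (Fin r ⊕ Fin r) (Fin s ⊕ Fin s) ℂ) :
    flatAdj (flatAdj X) = X := by
  simp only [flatAdj, conjTranspose_mul, Jmat_conjTranspose, conjTranspose_conjTranspose,
    Matrix.mul_assoc, Jmat_mul_Jmat, Matrix.mul_one]
  rw [← Matrix.mul_assoc, Jmat_mul_Jmat, Matrix.one_mul]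

lemma flatAdj_mul_Jmat_mul_mul {n : ℕ} (W M : Matrix (Fin n ⊕ Fin n) (Fin n ⊕ Fin n) ℂ) :
    flatAdj W * (Jmat n * M) * W = Jmat n * (Wᴴ * M * W) := by
  simp only [flatAdj, Matrix.mul_assoc]
  rw [← Matrix.mul_assoc (Jmat n) (Jmat n), Jmat_mul_Jmat, Matrix.one_mul]

lemma Matrix.inv_mul_mul_of_mul_eq_one {ι α : Type*} [Fintype ι] [DecidableEq ι] [CommRing α]
    {P Q : Matrix ι ι α} (h : Q * P = 1) (A : Matrix ι ι α) :
    (Q * A * P)⁻¹ = Q * A⁻¹ * P := by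
  rw [mul_inv_rev, mul_inv_rev, inv_eq_left_inv h, inv_eq_right_inv h, Matrix.mul_assoc]

def systemMatrix {m n : ℕ} (s : ℂ) (M : Matrix (Fin n ⊕ Fin n) (Fin n ⊕ Fin n) ℂ)
    (N : Matrix (Fin m ⊕ Fin m) (Fin n ⊕ Fin n) ℂ) : Matrix (Fin n ⊕ Fin n) (Fin n ⊕ Fin n) ℂ :=
  s • 1 + Complex.I • (Jmat n * M) + (1 / 2 : ℂ) • (flatAdj N * N)

/-- The transfer function `G(s)` with the scattering matrix `S` left out. -/
def transferMatrix {m n : ℕ} (s : ℂ) (M : Matrix (Fin n ⊕ Fin n) (Fin n ⊕ Fin n) ℂ)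
    (N : Matrix (Fin m ⊕ Fin m) (Fin n ⊕ Fin n) ℂ) : Matrix (Fin m ⊕ Fin m) (Fin m ⊕ Fin m) ℂ :=
  1 - N * (systemMatrix s M N)⁻¹ * flatAdj N

section Factorization

variable {m n : ℕ} (s : ℂ) (M : Matrix (Fin n ⊕ Fin n) (Fin n ⊕ Fin n) ℂ)
  {V : Matrix (Fin m ⊕ Fin m) (Fin m ⊕ Fin m) ℂ} {W : Matrix (Fin n ⊕ Fin n) (Fin n ⊕ Fin n) ℂ}

lemma systemMatrix_mul_left (hV : flatAdj V * V = 1)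
    (N : Matrix (Fin m ⊕ Fin m) (Fin n ⊕ Fin n) ℂ) :
    systemMatrix s M (V * N) = systemMatrix s M N := by
  simp only [systemMatrix, flatAdj_mul, Matrix.mul_assoc]
  rw [← Matrix.mul_assoc (flatAdj V), hV, Matrix.one_mul]

lemma flatAdj_mul_systemMatrix_mul (hW : flatAdj W * W = 1)
    (N : Matrix (Fin m ⊕ Fin m) (Fin n ⊕ Fin n) ℂ) :
    flatAdj W * systemMatrix s M N * W = systemMatrix s (Wᴴ * M * W) (N * W) := by
  simp only [systemMatrix, Matrix.mul_add, Matrix.add_mul, Matrix.mul_smul, Matrix.smul_mul,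
    Matrix.mul_one, hW, flatAdj_mul_Jmat_mul_mul, flatAdj_mul]
  simp only [Matrix.mul_assoc]

lemma flatAdj_mul_systemMatrix_factor_mul (hV : flatAdj V * V = 1) (hW : flatAdj W * W = 1)
    (Nh : Matrix (Fin m ⊕ Fin m) (Fin n ⊕ Fin n) ℂ) :
    flatAdj W * systemMatrix s M (V * Nh * flatAdj W) * W = systemMatrix s (Wᴴ * M * W) Nh := by
  rw [flatAdj_mul_systemMatrix_mul s M hW, Matrix.mul_assoc _ (flatAdj W), hW, Matrix.mul_one,
    systemMatrix_mul_left s _ hV]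

lemma transferMatrix_factor (hV : flatAdj V * V = 1) (hW : flatAdj W * W = 1)
    (Nh : Matrix (Fin m ⊕ Fin m) (Fin n ⊕ Fin n) ℂ) :
    transferMatrix s M (V * Nh * flatAdj W)
      = V * transferMatrix s (Wᴴ * M * W) Nh * flatAdj V := by
  rw [transferMatrix, transferMatrix, ← flatAdj_mul_systemMatrix_factor_mul s M hV hW,
    Matrix.inv_mul_mul_of_mul_eq_one hW, Matrix.mul_sub, Matrix.sub_mul, Matrix.mul_one,
    mul_eq_one_comm.mp hV, flatAdj_mul, flatAdj_mul, flatAdj_flatAdj]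
  simp only [Matrix.mul_assoc]

end Factorization

theorem general_transfer_function_factorization_general (m n : ℕ)
    (M : Matrix (Fin n ⊕ Fin n) (Fin n ⊕ Fin n) ℂ)
    (N : Matrix (Fin m ⊕ Fin m) (Fin n ⊕ Fin n) ℂ)
    (S : Matrix (Fin m ⊕ Fin m) (Fin m ⊕ Fin m) ℂ)
    (V : Matrix (Fin m ⊕ Fin m) (Fin m ⊕ Fin m) ℂ) (hV : Bogoliubov V)
    (W : Matrix (Fin n ⊕ Fin n) (Fin n ⊕ Fin n) ℂ) (hW : Bogoliubov W)
    (Nh : Matrix (Fin m ⊕ Fin m) (Fin n ⊕ Fin n) ℂ)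
    (hfact : N = V * Nh * flatAdj W) :
    ∀ s : ℂ,
      IsUnit (s • (1 : Matrix (Fin n ⊕ Fin n) (Fin n ⊕ Fin n) ℂ)
          + Complex.I • (Jmat n * M) + (1 / 2 : ℂ) • (flatAdj N * N)) →
      IsUnit (s • (1 : Matrix (Fin n ⊕ Fin n) (Fin n ⊕ Fin n) ℂ)
          + Complex.I • (Jmat n * (Wᴴ * M * W)) + (1 / 2 : ℂ) • (flatAdj Nh * Nh)) ∧
      (1 - N * (s • (1 : Matrix (Fin n ⊕ Fin n) (Fin n ⊕ Fin n) ℂ)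
            + Complex.I • (Jmat n * M) + (1 / 2 : ℂ) • (flatAdj N * N))⁻¹
          * flatAdj N) * S
        = V * (1 - Nh * (s • (1 : Matrix (Fin n ⊕ Fin n) (Fin n ⊕ Fin n) ℂ)
            + Complex.I • (Jmat n * (Wᴴ * M * W))
            + (1 / 2 : ℂ) • (flatAdj Nh * Nh))⁻¹ * flatAdj Nh) * (flatAdj V * S) := by
  subst hfact
  intro s hA
  constructor
  · show IsUnit (systemMatrix s (Wᴴ * M * W) Nh)
    rw [← flatAdj_mul_systemMatrix_factor_mul s M hV.2.2 hW.2.2]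
    exact ((IsUnit.of_mul_eq_one _ hW.2.2).mul hA).mul (IsUnit.of_mul_eq_one _ hW.2.1)
  · show transferMatrix s M (V * Nh * flatAdj W) * S
      = V * transferMatrix s (Wᴴ * M * W) Nh * (flatAdj V * S)
    rw [transferMatrix_factor s M hV.2.2 hW.2.2, Matrix.mul_assoc]

/-- Factorization of the transfer function of a general linear quantum
stochastic system: if `N = V N̂ W^♭` with `V`, `W` Bogoliubov and `N̂ = Nh`
doubled-up, then for every `s` for which `sI + iJM + (1/2)N^♭N` is invertible,
`sI + iJ(W†MW) + (1/2)N̂^♭N̂` is invertible and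
`[I − N(sI + iJM + N^♭N/2)⁻¹N^♭]S
  = V[I − N̂(sI + iJ(W†MW) + N̂^♭N̂/2)⁻¹N̂^♭](V^♭S)`. -/
theorem general_transfer_function_factorization (m n : ℕ)
    (M : Matrix (Fin n ⊕ Fin n) (Fin n ⊕ Fin n) ℂ)
    (hM : M.IsHermitian) (hMdu : DoubledUp M)
    (N : Matrix (Fin m ⊕ Fin m) (Fin n ⊕ Fin n) ℂ) (hNdu : DoubledUp N)
    (S : Matrix (Fin m ⊕ Fin m) (Fin m ⊕ Fin m) ℂ) (hS : Bogoliubov S)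
    (V : Matrix (Fin m ⊕ Fin m) (Fin m ⊕ Fin m) ℂ) (hV : Bogoliubov V)
    (W : Matrix (Fin n ⊕ Fin n) (Fin n ⊕ Fin n) ℂ) (hW : Bogoliubov W)
    (Nh : Matrix (Fin m ⊕ Fin m) (Fin n ⊕ Fin n) ℂ) (hNh : DoubledUp Nh)
    (hfact : N = V * Nh * flatAdj W) :
    ∀ s : ℂ,
      IsUnit (s • (1 : Matrix (Fin n ⊕ Fin n) (Fin n ⊕ Fin n) ℂ)
          + Complex.I • (Jmat n * M) + (1 / 2 : ℂ) • (flatAdj N * N)) →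
      IsUnit (s • (1 : Matrix (Fin n ⊕ Fin n) (Fin n ⊕ Fin n) ℂ)
          + Complex.I • (Jmat n * (Wᴴ * M * W)) + (1 / 2 : ℂ) • (flatAdj Nh * Nh)) ∧
      (1 - N * (s • (1 : Matrix (Fin n ⊕ Fin n) (Fin n ⊕ Fin n) ℂ)
            + Complex.I • (Jmat n * M) + (1 / 2 : ℂ) • (flatAdj N * N))⁻¹
          * flatAdj N) * S
        = V * (1 - Nh * (s • (1 : Matrix (Fin n ⊕ Fin n) (Fin n ⊕ Fin n) ℂ)
            + Complex.I • (Jmat n * (Wᴴ * M * W))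
            + (1 / 2 : ℂ) • (flatAdj Nh * Nh))⁻¹ * flatAdj Nh) * (flatAdj V * S) :=
  general_transfer_function_factorization_general m n M N S V hV W hW Nh hfact
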